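/- Let t ≥ 1 be an integer. (i) For every u ∈ 𝔫^{≥t}, the endomorphism id_V + u is invertible and (id_V + u)^{−1} ∘ X ∘ (id_V + u) − X belongs to 𝔬^{≥t}. (ii) For every Y ∈ 𝔬^{≥t} there exists u ∈ 𝔫^{≥t} such that Y − (X ∘ u − u ∘ X) belongs to 𝔬^{≥t+1}. -/

import Mathlib

/-- Index type of the standard basis `e(i,j,k)`: triples `(i,j,k)` with
`1 ≤ i ≤ j ≤ r`, `1 ≤ k ≤ d j`. -/
def RIdx (r : ℕ) (d : ℕ → ℕ) : Type :=
  {x : ℕ × ℕ × ℕ //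
    1 ≤ x.1 ∧ x.1 ≤ x.2.1 ∧ x.2.1 ≤ r ∧ 1 ≤ x.2.2 ∧ x.2.2 ≤ d x.2.1}

/-- The weight `p(i,j) = (i−1)(2r−i+2)/2 + (r−j+1)`. -/
def pfun (r i j : ℕ) : ℤ :=
  ((i : ℤ) - 1) * (2 * (r : ℤ) - (i : ℤ) + 2) / 2 + ((r : ℤ) - (j : ℤ) + 1)

/-- `𝔫^{≥t}`: endomorphisms all of whose nonzero blocks (matrix entries in the basis
`e`) occur for pairs with `p(i,j) − p(i',j') ≥ t`. -/
def nGE {F : Type*} [Field F] {V : Type*} [AddCommGroup V] [Module F V]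
    (r : ℕ) (d : ℕ → ℕ) (e : Module.Basis (RIdx r d) F V) (t : ℤ) :
    Set (Module.End F V) :=
  {A | ∀ x y : RIdx r d, e.repr (A (e x)) y ≠ 0 →
    t ≤ pfun r x.val.1 x.val.2.1 - pfun r y.val.1 y.val.2.1}

/-- `𝔬^{≥t}`: endomorphisms all of whose nonzero blocks occur for pairs with
`i > 1` and `p(i−1,j) − p(i',j') ≥ t`. -/
def oGE {F : Type*} [Field F] {V : Type*} [AddCommGroup V] [Module F V]
    (r : ℕ) (d : ℕ → ℕ) (e : Module.Basis (RIdx r d) F V) (t : ℤ) :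
    Set (Module.End F V) :=
  {A | ∀ x y : RIdx r d, e.repr (A (e x)) y ≠ 0 →
    1 < x.val.1 ∧
      t ≤ pfun r (x.val.1 - 1) x.val.2.1 - pfun r y.val.1 y.val.2.1}

/-!
The weight `p` orders the basis lexicographically, by the level `i` and then by decreasing
`j`; hence the entries of elements of `𝔫^{≥1}` and `𝔬^{≥1}` never raise the level. Moreover
`2 (p(a+s, j) - p(a, j)) = s (2r + 3 - 2a - s)` does not depend on `j` and decreases in `a`, so
moving both ends of a level-lowering entry down by the same amount can only increase its weight.

(i) Weights are bounded, so `u ∈ 𝔫^{≥t}` is nilpotent and `B = ∑ (-u)^k ∈ 𝔫^{≥0}` inverts `1 + u`;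
then `B X (1 + u) - X = B [X, u]`, and `[X, u] ∈ 𝔬^{≥t}` by the monotonicity of the gaps.

(ii) `Y` is even an exact commutator. Let `Z = RIdx.raise e` raise the level by one (zero at
the top of each string), so that `Z X` is the identity off level `1`. Since `Y` lowers levels,
`X^s Y Z^(s+1) X = X^s Y Z^s`, and `w = ∑_{s<r} X^s Y Z^(s+1)` telescopes to `[X, w] = -Y`
because `X^r = 0`. The gap estimate puts every term of `w` in `𝔫^{≥t}`.
-/

open Finset

namespace Module.Basis

variable {ι R M : Type*} [CommSemiring R] [AddCommMonoid M] [Module R M] (b : Basis ι R M)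

/-- `S x y` is required wherever the matrix of `A` in `b` has a nonzero entry in column `x`,
row `y`. -/
def endSupportedOn (S : ι → ι → Prop) : Submodule R (Module.End R M) where
  carrier := {A | ∀ x y, b.repr (A (b x)) y ≠ 0 → S x y}
  zero_mem' := by simp
  add_mem' {A B} hA hB x y h := by
    by_cases hAxy : b.repr (A (b x)) y = 0
    · refine hB x y ?_
      simpa [hAxy] using h
    · exact hA x y hAxy
  smul_mem' c A hA x y h := hA x y (right_ne_zero_of_mul (by simpa using h))

variable {b}

theorem endSupportedOn_mono {S T : ι → ι → Prop} (h : ∀ x y, S x y → T x y) :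
    b.endSupportedOn S ≤ b.endSupportedOn T :=
  fun _ hA x y hxy => h x y (hA x y hxy)

theorem mem_endSupportedOn_of_forall {S : ι → ι → Prop} {A : Module.End R M}
    (h : ∀ x, A (b x) = 0 ∨ ∃ y, S x y ∧ A (b x) = b y) : A ∈ b.endSupportedOn S := by
  intro x y hxy
  obtain hx | ⟨z, hz, hx⟩ := h x
  · simp [hx] at hxy
  · rw [hx, b.repr_self] at hxy
    by_cases hzy : y = z
    · exact hzy ▸ hz
    · exact absurd (Finsupp.single_eq_of_ne hzy) hxy

theorem one_mem_endSupportedOn {S : ι → ι → Prop} (hS : ∀ x, S x x) :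
    1 ∈ b.endSupportedOn S :=
  mem_endSupportedOn_of_forall fun x => Or.inr ⟨x, hS x, rfl⟩

theorem mul_mem_endSupportedOn {S T : ι → ι → Prop} {A B : Module.End R M}
    (hA : A ∈ b.endSupportedOn S) (hB : B ∈ b.endSupportedOn T) :
    A * B ∈ b.endSupportedOn (Relation.Comp T S) := by
  intro x y hxy
  by_contra hST
  refine hxy ?_
  conv_lhs => rw [Module.End.mul_apply, ← b.linearCombination_repr (B (b x))]
  rw [Finsupp.linearCombination_apply, map_finsuppSum, map_finsuppSum, Finsupp.sum,
    Finsupp.finsetSum_apply]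
  refine sum_eq_zero fun z hz => ?_
  have hAzy : b.repr (A (b z)) y = 0 := by
    by_contra hAzy
    exact hST ⟨z, hB x z (Finsupp.mem_support_iff.mp hz), hA z y hAzy⟩
  simp [hAzy]

theorem pow_mem_endSupportedOn {T : ι → ι → Prop} {S : ℕ → ι → ι → Prop}
    (h0 : ∀ x, S 0 x x) (hsucc : ∀ n x y z, S n x y → T y z → S (n + 1) x z)
    {A : Module.End R M} (hA : A ∈ b.endSupportedOn T) (n : ℕ) :
    A ^ n ∈ b.endSupportedOn (S n) := by
  induction n with
  | zero => exact pow_zero A ▸ one_mem_endSupportedOn h0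
  | succ n ih =>
    rw [pow_succ']
    exact endSupportedOn_mono (fun x z ⟨y, hxy, hyz⟩ => hsucc n x y z hxy hyz)
      (mul_mem_endSupportedOn hA ih)

theorem apply_eq_zero_of_mem_endSupportedOn {S : ι → ι → Prop} {A : Module.End R M}
    (hA : A ∈ b.endSupportedOn S) {x : ι} (hx : ∀ y, ¬ S x y) : A (b x) = 0 :=
  b.repr.injective <| by
    ext y
    by_contra hxy
    exact hx y (hA x y (by simpa using hxy))

theorem eq_zero_of_mem_endSupportedOn {S : ι → ι → Prop} {A : Module.End R M}
    (hA : A ∈ b.endSupportedOn S) (hS : ∀ x y, ¬ S x y) : A = 0 :=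
  b.ext fun x => apply_eq_zero_of_mem_endSupportedOn hA (hS x)

end Module.Basis

theorem conj_sub_eq_mul_commutator {A : Type*} [Ring A] {B u : A} (X : A)
    (h : B * (1 + u) = 1) : B * X * (1 + u) - X = B * (X * u - u * X) :=
  calc B * X * (1 + u) - X = B * X * (1 + u) - B * (1 + u) * X := by rw [h, one_mul]
    _ = B * (X * u - u * X) := by noncomm_ring

theorem mul_sum_sub_sum_mul_eq_neg {A : Type*} [Ring A] {X Y Z : A} {n : ℕ} (hXn : X ^ n = 0)
    (h : ∀ s, X ^ s * Y * Z ^ (s + 1) * X = X ^ s * Y * Z ^ s) :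
    X * (∑ s ∈ range n, X ^ s * Y * Z ^ (s + 1)) -
      (∑ s ∈ range n, X ^ s * Y * Z ^ (s + 1)) * X
      = -Y := by
  have hstep : ∀ s, X * (X ^ s * Y * Z ^ (s + 1)) - X ^ s * Y * Z ^ (s + 1) * X
      = X ^ (s + 1) * Y * Z ^ (s + 1) - X ^ s * Y * Z ^ s := fun s => by
    rw [h, pow_succ' X, mul_assoc, mul_assoc, mul_assoc, mul_assoc]
  rw [mul_sum, sum_mul, ← sum_sub_distrib]
  simp only [hstep]
  rw [sum_range_sub (fun s => X ^ s * Y * Z ^ s), hXn]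
  simp

theorem two_mul_pfun (r i j : ℕ) :
    2 * pfun r i j = ((i : ℤ) - 1) * (2 * r - i + 2) + 2 * (r - j + 1) := by
  have hdvd : (2 : ℤ) ∣ ((i : ℤ) - 1) * (2 * r - i + 2) := by
    obtain ⟨k, hk⟩ | ⟨k, hk⟩ := Int.even_or_odd ((i : ℤ) - 1)
    · exact ⟨k * (2 * r - i + 2), by rw [hk]; ring⟩
    · refine ⟨((i : ℤ) - 1) * (r - k), ?_⟩
      rw [show (2 * r - i + 2 : ℤ) = 2 * (r - k) by omega]
      ring
  rw [pfun, mul_add, Int.mul_ediv_cancel' hdvd]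

theorem two_mul_pfun_add_sub (r a s j : ℕ) :
    2 * (pfun r (a + s) j - pfun r a j) = s * (2 * r + 3 - 2 * a - s) := by
  have h₁ := two_mul_pfun r (a + s) j
  have h₂ := two_mul_pfun r a j
  push_cast at h₁
  linear_combination h₁ - h₂

theorem pfun_add_sub_le_of_le (r s j j' : ℕ) {a a' : ℕ} (h : a ≤ a') :
    pfun r (a' + s) j' - pfun r a' j' ≤ pfun r (a + s) j - pfun r a j := by
  have h₁ := two_mul_pfun_add_sub r a s j
  have h₂ := two_mul_pfun_add_sub r a' s j'
  have : (0 : ℤ) ≤ s * (a' - a) := mul_nonneg (by positivity) (by omega)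
  linarith

theorem le_of_pfun_le_pfun {r i j i' j' : ℕ} (hij : i ≤ j) (hi'j' : i' ≤ j') (hj' : j' ≤ r)
    (h : pfun r i' j' ≤ pfun r i j) : i' ≤ i := by
  by_contra! hlt
  have h₁ := two_mul_pfun r i j
  have h₂ := two_mul_pfun r i' j'
  -- `2 (p(i', j') - p(i, j)) - 2 ≥ (i' - i - 1) (2r + 2 - i - i') ≥ 0`
  have : (0 : ℤ) ≤ ((i' : ℤ) - i - 1) * (2 * r + 2 - i - i') :=
    mul_nonneg (by omega) (by omega)
  nlinarith

theorem pfun_pos {r i j : ℕ} (hi : 1 ≤ i) (hij : i ≤ j) (hj : j ≤ r) : 0 < pfun r i j := by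
  have h := two_mul_pfun r i j
  have : (0 : ℤ) ≤ ((i : ℤ) - 1) * (2 * r - i + 2) := mul_nonneg (by omega) (by omega)
  omega

theorem pfun_lt_sq {r i j : ℕ} (hi : 1 ≤ i) (hij : i ≤ j) (hj : j ≤ r) :
    pfun r i j < ((r + 1) ^ 2 : ℕ) := by
  have h := two_mul_pfun r i j
  have : ((i : ℤ) - 1) * (2 * r - i + 2) ≤ (r - 1) * (2 * r + 1) :=
    mul_le_mul (by omega) (by omega) (by omega) (by omega)
  push_cast
  nlinarith

namespace RIdx

open Module.Basis

variable {r : ℕ} {d : ℕ → ℕ}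

def down (x : RIdx r d) (hx : 1 < x.val.1) : RIdx r d :=
  ⟨(x.val.1 - 1, x.val.2), by
    obtain ⟨h₁, h₂, h₃, h₄, h₅⟩ := x.property
    exact ⟨by omega, by dsimp only; omega, h₃, h₄, h₅⟩⟩

def up (x : RIdx r d) (hx : x.val.1 < x.val.2.1) : RIdx r d :=
  ⟨(x.val.1 + 1, x.val.2), by
    obtain ⟨h₁, h₂, h₃, h₄, h₅⟩ := x.property
    exact ⟨by omega, hx, h₃, h₄, h₅⟩⟩

theorem up_down (x : RIdx r d) (hx : 1 < x.val.1) (h : (x.down hx).val.1 < (x.down hx).val.2.1) :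
    (x.down hx).up h = x :=
  Subtype.ext <| Prod.ext (Nat.sub_add_cancel hx.le) rfl

variable {F V : Type*} [CommRing F] [AddCommGroup V] [Module F V]
  (e : Module.Basis (RIdx r d) F V)

noncomputable def raise : Module.End F V :=
  e.constr F fun x => if h : x.val.1 < x.val.2.1 then e (x.up h) else 0

theorem raise_apply_down (x : RIdx r d) (hx : 1 < x.val.1) : raise e (e (x.down hx)) = e x := by
  have h : (x.down hx).val.1 < (x.down hx).val.2.1 := by
    have := x.property.2.1
    change x.val.1 - 1 < x.val.2.1
    omega
  rw [raise, constr_basis, dif_pos h, up_down]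

theorem raise_mem :
    raise e ∈ e.endSupportedOn fun x y => y.val.1 = x.val.1 + 1 ∧ y.val.2.1 = x.val.2.1 := by
  refine mem_endSupportedOn_of_forall fun x => ?_
  rw [raise, constr_basis]
  split_ifs with h
  · exact Or.inr ⟨x.up h, ⟨rfl, rfl⟩, rfl⟩
  · exact Or.inl rfl

theorem pow_raise_mem (n : ℕ) :
    raise e ^ n ∈ e.endSupportedOn fun x y => y.val.1 = x.val.1 + n ∧ y.val.2.1 = x.val.2.1 :=
  pow_mem_endSupportedOn
    (S := fun n (x y : RIdx r d) => y.val.1 = x.val.1 + n ∧ y.val.2.1 = x.val.2.1)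
    (fun _ => ⟨rfl, rfl⟩) (fun n x y z hxy hyz => ⟨by omega, hyz.2.trans hxy.2⟩)
    (raise_mem e) n

variable {e} {X : Module.End F V}

theorem mem_endSupportedOn_of_lowering (hX0 : ∀ x : RIdx r d, x.val.1 = 1 → X (e x) = 0)
    (hXs : ∀ x y : RIdx r d, x.val.1 = y.val.1 + 1 → x.val.2 = y.val.2 → X (e x) = e y) :
    X ∈ e.endSupportedOn fun x y => x.val.1 = y.val.1 + 1 ∧ x.val.2.1 = y.val.2.1 := by
  refine mem_endSupportedOn_of_forall fun x => ?_
  by_cases hx : 1 < x.val.1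
  · have hxd : x.val.1 = (x.down hx).val.1 + 1 := (Nat.sub_add_cancel hx.le).symm
    exact Or.inr ⟨x.down hx, ⟨hxd, rfl⟩, hXs x _ hxd rfl⟩
  · exact Or.inl (hX0 x (by have := x.property.1; omega))

variable (hX : X ∈ e.endSupportedOn fun x y => x.val.1 = y.val.1 + 1 ∧ x.val.2.1 = y.val.2.1)
include hX

theorem pow_mem_of_lowering (n : ℕ) :
    X ^ n ∈ e.endSupportedOn fun x y => x.val.1 = y.val.1 + n ∧ x.val.2.1 = y.val.2.1 :=
  pow_mem_endSupportedOn
    (S := fun n (x y : RIdx r d) => x.val.1 = y.val.1 + n ∧ x.val.2.1 = y.val.2.1)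
    (fun _ => ⟨rfl, rfl⟩)
    (fun n x y z hxy hyz => ⟨by omega, hxy.2.trans hyz.2⟩) hX n

theorem pow_eq_zero_of_lowering : X ^ r = 0 :=
  eq_zero_of_mem_endSupportedOn (pow_mem_of_lowering hX r) fun x y hxy => by
    have := x.property.2.1
    have := x.property.2.2.1
    have := y.property.1
    omega

end RIdx

section Filtration

variable {r : ℕ} {d : ℕ → ℕ} {F V : Type*} [Field F] [AddCommGroup V] [Module F V]
  {e : Module.Basis (RIdx r d) F V} {X A B : Module.End F V} {t : ℤ}

open Module.Basis

theorem nGE_eq (t : ℤ) : nGE r d e t = e.endSupportedOn fun x y =>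
    t ≤ pfun r x.val.1 x.val.2.1 - pfun r y.val.1 y.val.2.1 := rfl

theorem oGE_eq (t : ℤ) : oGE r d e t = e.endSupportedOn fun x y =>
    1 < x.val.1 ∧ t ≤ pfun r (x.val.1 - 1) x.val.2.1 - pfun r y.val.1 y.val.2.1 := rfl

theorem nGE_anti {s : ℤ} (hst : s ≤ t) (hA : A ∈ nGE r d e t) : A ∈ nGE r d e s :=
  fun x y hxy => hst.trans (hA x y hxy)

theorem pow_mem_nGE (hA : A ∈ nGE r d e t) (n : ℕ) : A ^ n ∈ nGE r d e (n * t) := by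
  rw [nGE_eq] at *
  exact pow_mem_endSupportedOn
    (S := fun n (x y : RIdx r d) => n * t ≤ pfun r x.val.1 x.val.2.1 - pfun r y.val.1 y.val.2.1)
    (fun _ => by simp) (fun n x y z _ _ => by push_cast; linarith) hA n

theorem eq_zero_of_mem_nGE (ht : ((r + 1) ^ 2 : ℕ) ≤ t) (hA : A ∈ nGE r d e t) : A = 0 :=
  eq_zero_of_mem_endSupportedOn hA fun x y hxy => by
    obtain ⟨hx₁, hx₂, hx₃, -, -⟩ := x.property
    obtain ⟨hy₁, hy₂, hy₃, -, -⟩ := y.property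
    have := pfun_lt_sq hx₁ hx₂ hx₃
    have := pfun_pos hy₁ hy₂ hy₃
    linarith

theorem mul_mem_oGE (hA : A ∈ nGE r d e 0) (hB : B ∈ oGE r d e t) : A * B ∈ oGE r d e t := by
  rw [nGE_eq] at hA
  rw [oGE_eq] at *
  exact endSupportedOn_mono (fun x y ⟨_, ⟨hx, hxz⟩, hzy⟩ => ⟨hx, by linarith⟩)
    (mul_mem_endSupportedOn hA hB)

/-- Entries of `𝔬^{≥1}` strictly lower the level `i`, because `p` increases with `i`. -/
theorem lt_of_le_pfun_sub (ht : 1 ≤ t) {x y : RIdx r d}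
    (h : t ≤ pfun r (x.val.1 - 1) x.val.2.1 - pfun r y.val.1 y.val.2.1) : y.val.1 < x.val.1 := by
  have := le_of_pfun_le_pfun (by have := x.property.2.1; omega) y.property.2.1 y.property.2.2.1
    (by linarith : pfun r y.val.1 y.val.2.1 ≤ pfun r (x.val.1 - 1) x.val.2.1)
  have := y.property.1
  omega

theorem commutator_mem_oGE
    (hX : X ∈ e.endSupportedOn fun x y => x.val.1 = y.val.1 + 1 ∧ x.val.2.1 = y.val.2.1)
    (ht : 1 ≤ t) {u : Module.End F V} (hu : u ∈ nGE r d e t) :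
    X * u - u * X ∈ oGE r d e t := by
  rw [nGE_eq] at hu
  rw [oGE_eq]
  refine sub_mem (endSupportedOn_mono ?_ (mul_mem_endSupportedOn hX hu))
    (endSupportedOn_mono ?_ (mul_mem_endSupportedOn hu hX))
  · rintro x y ⟨z, hxz, hzy₁, hzy₂⟩
    have hzx : z.val.1 ≤ x.val.1 := le_of_pfun_le_pfun x.property.2.1 z.property.2.1
      z.property.2.2.1 (by linarith)
    have hy := y.property.1
    have hgap := pfun_add_sub_le_of_le r 1 y.val.2.1 x.val.2.1 (a := y.val.1) (a' := x.val.1 - 1)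
      (by omega)
    rw [Nat.sub_add_cancel (by omega), ← hzy₁] at hgap
    rw [hzy₂] at hxz
    exact ⟨by omega, by linarith⟩
  · rintro x y ⟨z, ⟨hxz₁, hxz₂⟩, hzy⟩
    have hz := z.property.1
    rw [hxz₁, Nat.add_sub_cancel, hxz₂]
    exact ⟨by omega, hzy⟩

theorem exists_inverse_conj_sub_mem_oGE
    (hX : X ∈ e.endSupportedOn fun x y => x.val.1 = y.val.1 + 1 ∧ x.val.2.1 = y.val.2.1)
    (ht : 1 ≤ t) {u : Module.End F V} (hu : u ∈ nGE r d e t) :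
    ∃ B : Module.End F V, B * (1 + u) = 1 ∧ (1 + u) * B = 1 ∧
      B * X * (1 + u) - X ∈ oGE r d e t := by
  set N := (r + 1) ^ 2
  have hneg : -u ∈ nGE r d e t := by rw [nGE_eq] at *; exact neg_mem hu
  have hnil : (-u) ^ N = 0 :=
    eq_zero_of_mem_nGE (le_mul_of_one_le_right (by positivity) ht) (pow_mem_nGE hneg N)
  have hB : ∑ k ∈ range N, (-u) ^ k ∈ nGE r d e 0 := by
    rw [nGE_eq]
    exact sum_mem fun k _ => nGE_anti (by positivity) (pow_mem_nGE hneg k)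
  have hleft := geom_sum_mul_neg (-u) N
  have hright := mul_neg_geom_sum (-u) N
  rw [sub_neg_eq_add, hnil, sub_zero] at hleft hright
  refine ⟨_, hleft, hright, ?_⟩
  rw [conj_sub_eq_mul_commutator X hleft]
  exact mul_mem_oGE hB (commutator_mem_oGE hX ht hu)

end Filtration

namespace RIdx

variable {r : ℕ} {d : ℕ → ℕ} {F V : Type*} [Field F] [AddCommGroup V] [Module F V]
  {e : Module.Basis (RIdx r d) F V} {X Y : Module.End F V} {t : ℤ}

open Module.Basis

theorem pow_mul_mul_raise_pow_succ_mem_nGE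
    (hX : X ∈ e.endSupportedOn fun x y => x.val.1 = y.val.1 + 1 ∧ x.val.2.1 = y.val.2.1)
    (ht : 1 ≤ t) (hY : Y ∈ oGE r d e t) (s : ℕ) :
    X ^ s * Y * raise e ^ (s + 1) ∈ nGE r d e t := by
  rw [oGE_eq] at hY
  rw [nGE_eq]
  refine endSupportedOn_mono ?_ (mul_mem_endSupportedOn
    (mul_mem_endSupportedOn (pow_mem_of_lowering hX s) hY) (pow_raise_mem e (s + 1)))
  rintro z w ⟨z', ⟨hz'₁, hz'₂⟩, y, ⟨-, hz'y⟩, hyw₁, hyw₂⟩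
  have hlt := lt_of_le_pfun_sub ht hz'y
  rw [hz'₁, hz'₂, show z.val.1 + (s + 1) - 1 = z.val.1 + s by omega] at hz'y
  have hgap := pfun_add_sub_le_of_le r s w.val.2.1 z.val.2.1 (a := w.val.1) (a' := z.val.1)
    (by omega)
  rw [← hyw₁] at hgap
  rw [hyw₂] at hz'y
  linarith

theorem pow_mul_mul_raise_pow_succ_mul (hX0 : ∀ x : RIdx r d, x.val.1 = 1 → X (e x) = 0)
    (hXs : ∀ x y : RIdx r d, x.val.1 = y.val.1 + 1 → x.val.2 = y.val.2 → X (e x) = e y)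
    (hY : Y ∈ e.endSupportedOn fun x y => y.val.1 < x.val.1) (s : ℕ) :
    X ^ s * Y * raise e ^ (s + 1) * X = X ^ s * Y * raise e ^ s := by
  refine e.ext fun x => ?_
  by_cases hx : 1 < x.val.1
  · rw [Module.End.mul_apply, hXs x (x.down hx) (Nat.sub_add_cancel hx.le).symm rfl, pow_succ,
      ← mul_assoc, Module.End.mul_apply, raise_apply_down]
  · have hx₁ : x.val.1 = 1 := by have := x.property.1; omega
    rw [Module.End.mul_apply, hX0 x hx₁, map_zero, eq_comm]
    refine apply_eq_zero_of_mem_endSupportedOn (mul_mem_endSupportedOn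
      (mul_mem_endSupportedOn (pow_mem_of_lowering (mem_endSupportedOn_of_lowering hX0 hXs) s) hY)
      (pow_raise_mem e s)) ?_
    rintro w ⟨x', ⟨hx'₁, -⟩, y, hx'y, hyw, -⟩
    have := w.property.1
    omega

theorem exists_mem_nGE_commutator_eq (hX0 : ∀ x : RIdx r d, x.val.1 = 1 → X (e x) = 0)
    (hXs : ∀ x y : RIdx r d, x.val.1 = y.val.1 + 1 → x.val.2 = y.val.2 → X (e x) = e y)
    (ht : 1 ≤ t) (hY : Y ∈ oGE r d e t) : ∃ u ∈ nGE r d e t, X * u - u * X = Y := by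
  have hX := mem_endSupportedOn_of_lowering hX0 hXs
  have hYlower : Y ∈ e.endSupportedOn fun x y => y.val.1 < x.val.1 :=
    endSupportedOn_mono (fun _ _ h => lt_of_le_pfun_sub ht h.2) hY
  set w := ∑ s ∈ range r, X ^ s * Y * raise e ^ (s + 1)
  have hw : X * w - w * X = -Y := mul_sum_sub_sum_mul_eq_neg (pow_eq_zero_of_lowering hX)
    (pow_mul_mul_raise_pow_succ_mul hX0 hXs hYlower)
  refine ⟨-w, ?_, ?_⟩
  · rw [nGE_eq]
    exact neg_mem (sum_mem fun s _ => pow_mul_mul_raise_pow_succ_mem_nGE hX ht hY s)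
  · calc X * -w - -w * X = -(X * w - w * X) := by noncomm_ring
      _ = Y := by rw [hw, neg_neg]

end RIdx

theorem stmt_13_general (r : ℕ) (d : ℕ → ℕ)
    (F : Type*) [Field F] (V : Type*) [AddCommGroup V] [Module F V]
    (e : Module.Basis (RIdx r d) F V) (X : Module.End F V)
    (hX0 : ∀ x : RIdx r d, x.val.1 = 1 → X (e x) = 0)
    (hXs : ∀ x y : RIdx r d, x.val.1 = y.val.1 + 1 → x.val.2 = y.val.2 →
      X (e x) = e y)
    (t : ℤ) (ht : 1 ≤ t) :
    (∀ u ∈ nGE r d e t, ∃ B : Module.End F V,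
      B * (1 + u) = 1 ∧ (1 + u) * B = 1 ∧
        B * X * (1 + u) - X ∈ oGE r d e t) ∧
    (∀ Y ∈ oGE r d e t, ∃ u ∈ nGE r d e t,
      Y - (X * u - u * X) ∈ oGE r d e (t + 1)) := by
  refine ⟨fun u hu => exists_inverse_conj_sub_mem_oGE
    (RIdx.mem_endSupportedOn_of_lowering hX0 hXs) ht hu, fun Y hY => ?_⟩
  obtain ⟨u, hu, hcomm⟩ := RIdx.exists_mem_nGE_commutator_eq hX0 hXs ht hY
  refine ⟨u, hu, ?_⟩
  rw [hcomm, sub_self, oGE_eq]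
  exact zero_mem _

/-- for `t ≥ 1`: (i) for every `u ∈ 𝔫^{≥t}`, `id + u` is invertible and
`(id+u)⁻¹ ∘ X ∘ (id+u) − X ∈ 𝔬^{≥t}`; (ii) for every `Y ∈ 𝔬^{≥t}` there is
`u ∈ 𝔫^{≥t}` with `Y − (X∘u − u∘X) ∈ 𝔬^{≥t+1}`. -/
theorem stmt_13 (r : ℕ) (hr : 1 ≤ r) (d : ℕ → ℕ) (hd : 1 ≤ d r)
    (F : Type*) [Field F] [CharZero F] (V : Type*) [AddCommGroup V] [Module F V]
    (e : Module.Basis (RIdx r d) F V) (X : Module.End F V)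
    (hX0 : ∀ x : RIdx r d, x.val.1 = 1 → X (e x) = 0)
    (hXs : ∀ x y : RIdx r d, x.val.1 = y.val.1 + 1 → x.val.2 = y.val.2 →
      X (e x) = e y)
    (t : ℤ) (ht : 1 ≤ t) :
    (∀ u ∈ nGE r d e t, ∃ B : Module.End F V,
      B * (1 + u) = 1 ∧ (1 + u) * B = 1 ∧
        B * X * (1 + u) - X ∈ oGE r d e t) ∧
    (∀ Y ∈ oGE r d e t, ∃ u ∈ nGE r d e t,
      Y - (X * u - u * X) ∈ oGE r d e (t + 1)) :=
  stmt_13_general r d F V e X hX0 hXs t ht
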